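/- Fix an initial state x ∈ ℝ^n, weights w₁, w₂ ≥ 0, and a horizon N. Then the set of achievable objective values coincides for the robust and the certified formulations; in particular sup{ w₁ μ − w₂ ε : μ ≥ 0, ε ≥ 0, and there exist α₁ ∈ ℝ^{m×n}, α₂ ∈ ℝ^m such that for every disturbance sequence d(0), …, d(N−1) with ‖d(i)‖∞ ≤ μ, the closed-loop trajectory x(0) = x, x(k+1) = A_k x(k) + B_k (α₁ x(k) + α₂) + d(k) satisfies G_k x(k) ≤ H_k for all k = 0, …, N and ‖α₁ x(k) + α₂‖∞ ≤ ε for all k = 0, …, N−1 } = sup{ w₁ μ − w₂ ε : μ ≥ 0, ε ≥ 0, and there exist α₁ ∈ ℝ^{m×n}, α₂ ∈ ℝ^m and a nonnegative matrix P ∈ ℝ^{((N+1)q + 2mN) × 2n(N+1)} with P A_b = μ E^{cl}(α₁) and P B_b ≤ F^{cl}(x, α₁, α₂, ε) }. -/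

import Mathlib

open Matrix Finset

noncomputable section

/-- Ordered product `M (k-1) * M (k-2) * ⋯ * M i` (empty product = identity when `k ≤ i`). -/
def mprod {n : ℕ} (M : ℕ → Matrix (Fin n) (Fin n) ℝ) (i k : ℕ) :
    Matrix (Fin n) (Fin n) ℝ :=
  (((List.range' i (k - i)).reverse).map M).prod

def Abar {n m : ℕ} (A : ℕ → Matrix (Fin n) (Fin n) ℝ) (B : ℕ → Matrix (Fin n) (Fin m) ℝ)
    (α₁ : Matrix (Fin m) (Fin n) ℝ) (j : ℕ) : Matrix (Fin n) (Fin n) ℝ :=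
  A j + B j * α₁

def trajCL {n m : ℕ} (A : ℕ → Matrix (Fin n) (Fin n) ℝ) (B : ℕ → Matrix (Fin n) (Fin m) ℝ)
    (α₁ : Matrix (Fin m) (Fin n) ℝ) (α₂ : Fin m → ℝ) (d : ℕ → Fin n → ℝ)
    (x0 : Fin n → ℝ) : ℕ → Fin n → ℝ
  | 0 => x0
  | k + 1 =>
      (A k).mulVec (trajCL A B α₁ α₂ d x0 k)
        + (B k).mulVec (α₁.mulVec (trajCL A B α₁ α₂ d x0 k) + α₂) + d k

def Eblk {n : ℕ} (N : ℕ) (M : ℕ → Matrix (Fin n) (Fin n) ℝ) (k : ℕ) :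
    Matrix (Fin n) (Fin (N + 1) × Fin n) ℝ :=
  Matrix.of fun r jc =>
    if 1 ≤ (jc.1 : ℕ) ∧ (jc.1 : ℕ) ≤ k then mprod M (jc.1 : ℕ) k r jc.2 else 0

def Fblk {n m : ℕ} (A : ℕ → Matrix (Fin n) (Fin n) ℝ) (B : ℕ → Matrix (Fin n) (Fin m) ℝ)
    (α₁ : Matrix (Fin m) (Fin n) ℝ) (α₂ : Fin m → ℝ) (x : Fin n → ℝ) (k : ℕ) : Fin n → ℝ :=
  (mprod (Abar A B α₁) 0 k).mulVec x
    + ∑ i ∈ Finset.range k, (mprod (Abar A B α₁) (i + 1) k * B i).mulVec α₂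

def Ex {n m q : ℕ} (N : ℕ) (A : ℕ → Matrix (Fin n) (Fin n) ℝ)
    (B : ℕ → Matrix (Fin n) (Fin m) ℝ) (G : ℕ → Matrix (Fin q) (Fin n) ℝ)
    (α₁ : Matrix (Fin m) (Fin n) ℝ) :
    Matrix (Fin (N + 1) × Fin q) (Fin (N + 1) × Fin n) ℝ :=
  Matrix.of fun kr jc => (G (kr.1 : ℕ) * Eblk N (Abar A B α₁) (kr.1 : ℕ)) kr.2 jc

def Fx {n m q : ℕ} (N : ℕ) (A : ℕ → Matrix (Fin n) (Fin n) ℝ)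
    (B : ℕ → Matrix (Fin n) (Fin m) ℝ) (G : ℕ → Matrix (Fin q) (Fin n) ℝ)
    (H : ℕ → Fin q → ℝ) (α₁ : Matrix (Fin m) (Fin n) ℝ) (α₂ : Fin m → ℝ)
    (x : Fin n → ℝ) : Fin (N + 1) × Fin q → ℝ :=
  fun kr => H (kr.1 : ℕ) kr.2 - (G (kr.1 : ℕ)).mulVec (Fblk A B α₁ α₂ x (kr.1 : ℕ)) kr.2

def Au (m : ℕ) : Matrix (Fin m ⊕ Fin m) (Fin m) ℝ := Matrix.fromRows 1 (-1)

def Sk {n m : ℕ} (A : ℕ → Matrix (Fin n) (Fin n) ℝ) (B : ℕ → Matrix (Fin n) (Fin m) ℝ)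
    (α₁ : Matrix (Fin m) (Fin n) ℝ) (α₂ : Fin m → ℝ) (x : Fin n → ℝ) (k : ℕ) : Fin m → ℝ :=
  α₁.mulVec (Fblk A B α₁ α₂ x k) + α₂

def Ecl {n m q : ℕ} (N : ℕ) (A : ℕ → Matrix (Fin n) (Fin n) ℝ)
    (B : ℕ → Matrix (Fin n) (Fin m) ℝ) (G : ℕ → Matrix (Fin q) (Fin n) ℝ)
    (α₁ : Matrix (Fin m) (Fin n) ℝ) :
    Matrix ((Fin (N + 1) × Fin q) ⊕ (Fin N × (Fin m ⊕ Fin m))) (Fin (N + 1) × Fin n) ℝ :=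
  Matrix.fromRows (Ex N A B G α₁)
    (Matrix.of fun kr jc => (Au m * α₁ * Eblk N (Abar A B α₁) (kr.1 : ℕ)) kr.2 jc)

def Fcl {n m q : ℕ} (N : ℕ) (A : ℕ → Matrix (Fin n) (Fin n) ℝ)
    (B : ℕ → Matrix (Fin n) (Fin m) ℝ) (G : ℕ → Matrix (Fin q) (Fin n) ℝ)
    (H : ℕ → Fin q → ℝ) (α₁ : Matrix (Fin m) (Fin n) ℝ) (α₂ : Fin m → ℝ)
    (x : Fin n → ℝ) (ε : ℝ) : (Fin (N + 1) × Fin q) ⊕ (Fin N × (Fin m ⊕ Fin m)) → ℝ :=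
  Sum.elim (Fx N A B G H α₁ α₂ x)
    (fun kr => ε - (Au m).mulVec (Sk A B α₁ α₂ x (kr.1 : ℕ)) kr.2)

def AbM (N n : ℕ) :
    Matrix ((Fin (N + 1) × Fin n) ⊕ (Fin (N + 1) × Fin n)) (Fin (N + 1) × Fin n) ℝ :=
  Matrix.fromRows 1 (-1)

def BbV (N n : ℕ) : (Fin (N + 1) × Fin n) ⊕ (Fin (N + 1) × Fin n) → ℝ := fun _ => 1

def trajOL {n m : ℕ} (A : ℕ → Matrix (Fin n) (Fin n) ℝ) (B : ℕ → Matrix (Fin n) (Fin m) ℝ)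
    (u : ℕ → Fin m → ℝ) (d : ℕ → Fin n → ℝ) (x0 : Fin n → ℝ) : ℕ → Fin n → ℝ
  | 0 => x0
  | k + 1 => (A k).mulVec (trajOL A B u d x0 k) + (B k).mulVec (u k) + d k

def Eol {n q : ℕ} (N : ℕ) (A : ℕ → Matrix (Fin n) (Fin n) ℝ)
    (G : ℕ → Matrix (Fin q) (Fin n) ℝ) :
    Matrix (Fin (N + 1) × Fin q) (Fin (N + 1) × Fin n) ℝ :=
  Matrix.of fun kr jc => (G (kr.1 : ℕ) * Eblk N A (kr.1 : ℕ)) kr.2 jc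

def Fol {n m q : ℕ} (N : ℕ) (A : ℕ → Matrix (Fin n) (Fin n) ℝ)
    (B : ℕ → Matrix (Fin n) (Fin m) ℝ) (G : ℕ → Matrix (Fin q) (Fin n) ℝ)
    (H : ℕ → Fin q → ℝ) (x : Fin n → ℝ) (ut : ℕ → Fin m → ℝ) (ε : ℝ) :
    Fin (N + 1) × Fin q → ℝ :=
  fun kr => H (kr.1 : ℕ) kr.2
    - (G (kr.1 : ℕ)).mulVec ((mprod A 0 (kr.1 : ℕ)).mulVec x) kr.2
    - ε * (G (kr.1 : ℕ)).mulVec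
        (∑ i ∈ Finset.range (kr.1 : ℕ), (mprod A (i + 1) (kr.1 : ℕ) * B i).mulVec (ut i)) kr.2

/-!
For fixed gains `α₁, α₂` the closed-loop state is affine in the disturbance:
`x(k) = F_k + E_k D`, where `D` stacks `d(0), …, d(N-1)`. Hence the robust constraints say
exactly that `E^cl D ≤ F^cl` for every `D` in the box `‖D‖∞ ≤ μ`. A linear inequality holds on
a box iff it holds at the worst vertex of each row, i.e. `μ ∑ⱼ |E_ij| ≤ F_i`, and the nonnegative
certificate `P = μ [E⁺ E⁻]` encodes precisely this; conversely, any such `P` gives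
`μ E D = P A_b D ≤ μ P B_b ≤ μ F`. So the two feasible sets, and their suprema, coincide.
-/

theorem forall_abs_le_imp_mulVec_le_iff_exists_certificate {ι κ : Type*} [Fintype κ]
    [DecidableEq κ] (E : Matrix ι κ ℝ) (F : ι → ℝ) {μ : ℝ} (hμ : 0 ≤ μ) :
    (∀ D : κ → ℝ, (∀ j, |D j| ≤ μ) → E *ᵥ D ≤ F) ↔
      ∃ P : Matrix ι (κ ⊕ κ) ℝ, (∀ i j, 0 ≤ P i j) ∧
        P * fromRows (1 : Matrix κ κ ℝ) (-1) = μ • E ∧ P *ᵥ (fun _ => 1) ≤ F := by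
  constructor
  · intro h
    set Epos : Matrix ι κ ℝ := of fun i j => (E i j)⁺
    set Eneg : Matrix ι κ ℝ := of fun i j => (E i j)⁻
    refine ⟨fromCols (μ • Epos) (μ • Eneg), ?_, ?_, fun i => ?_⟩
    · rintro i (j | j) <;> simp [Epos, Eneg, mul_nonneg hμ]
    · refine (fromCols_mul_fromRows _ _ _ _).trans ?_
      ext i j
      simp [Epos, Eneg, ← sub_eq_add_neg, ← mul_sub]
    · -- the worst disturbance for row `i` follows the signs of that row
      let D : κ → ℝ := fun j => if 0 ≤ E i j then μ else -μ
      have hD : ∀ j, |D j| ≤ μ := fun j => by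
        unfold D; split_ifs <;> simp [abs_of_nonneg hμ]
      calc (fromCols (μ • Epos) (μ • Eneg) *ᵥ fun _ => 1) i
          = (E *ᵥ D) i := by
            rw [mulVec, mulVec, dotProduct, dotProduct, Fintype.sum_sum_type,
              ← Finset.sum_add_distrib]
            refine Finset.sum_congr rfl fun j _ => ?_
            simp only [fromCols_apply_inl, fromCols_apply_inr, Matrix.smul_apply, of_apply,
              smul_eq_mul, mul_one, Epos, Eneg, D]
            split_ifs with hj
            · rw [posPart_of_nonneg hj, negPart_of_nonneg hj]; ring
            · rw [posPart_of_nonpos (not_le.1 hj).le, negPart_of_nonpos (not_le.1 hj).le]; ring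
        _ ≤ F i := h D hD i
  · rintro ⟨P, hP, hPE, hPF⟩ D hD
    have hP1 : 0 ≤ P *ᵥ (fun _ => 1) := fun i =>
      dotProduct_nonneg_of_nonneg (hP i) fun _ => zero_le_one
    rcases hμ.eq_or_lt with rfl | hμ
    · have : D = 0 := funext fun j => abs_nonpos_iff.1 (hD j)
      simpa [this] using hP1.trans hPF
    · set Ab : Matrix (κ ⊕ κ) κ ℝ := fromRows 1 (-1)
      have hbox : Ab *ᵥ D ≤ μ • fun _ => 1 := by
        rintro (j | j)
        · simpa [Ab] using (le_abs_self _).trans (hD j)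
        · simpa [Ab, neg_mulVec] using (neg_le_abs _).trans (hD j)
      intro i
      refine le_of_mul_le_mul_left ?_ hμ
      have hPE' : P *ᵥ (Ab *ᵥ D) = μ • (E *ᵥ D) := by
        rw [mulVec_mulVec, ← smul_mulVec]
        exact congrArg (· *ᵥ D) hPE
      calc μ * (E *ᵥ D) i = (P *ᵥ (Ab *ᵥ D)) i := by
            rw [hPE', Pi.smul_apply, smul_eq_mul]
        _ ≤ (P *ᵥ (μ • fun _ => 1)) i := dotProduct_le_dotProduct_of_nonneg_left hbox (hP i)
        _ ≤ μ * F i := by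
            rw [mulVec_smul, Pi.smul_apply, smul_eq_mul]
            exact mul_le_mul_of_nonneg_left (hPF i) hμ.le

section Trajectory

variable {n m : ℕ}

def RobustFeasible {q : ℕ} (N : ℕ) (A : ℕ → Matrix (Fin n) (Fin n) ℝ)
    (B : ℕ → Matrix (Fin n) (Fin m) ℝ) (G : ℕ → Matrix (Fin q) (Fin n) ℝ) (H : ℕ → Fin q → ℝ)
    (x : Fin n → ℝ) (α₁ : Matrix (Fin m) (Fin n) ℝ) (α₂ : Fin m → ℝ) (μ ε : ℝ) : Prop :=
  ∀ d : ℕ → Fin n → ℝ, (∀ i, i < N → ‖d i‖ ≤ μ) →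
    (∀ k, k ≤ N → G k *ᵥ trajCL A B α₁ α₂ d x k ≤ H k) ∧
      (∀ k, k < N → ‖α₁ *ᵥ trajCL A B α₁ α₂ d x k + α₂‖ ≤ ε)

lemma mprod_self (M : ℕ → Matrix (Fin n) (Fin n) ℝ) (k : ℕ) : mprod M k k = 1 := by
  simp [mprod]

lemma mprod_succ (M : ℕ → Matrix (Fin n) (Fin n) ℝ) {i k : ℕ} (h : i ≤ k) :
    mprod M i (k + 1) = M k * mprod M i k := by
  rw [mprod, show k + 1 - i = k - i + 1 by omega, List.range'_concat,
    show i + 1 * (k - i) = k by omega]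
  simp [mprod]

lemma sum_mprod_mulVec_succ (M : ℕ → Matrix (Fin n) (Fin n) ℝ) (f : ℕ → Fin n → ℝ) (k : ℕ) :
    ∑ i ∈ range (k + 1), mprod M (i + 1) (k + 1) *ᵥ f i
      = M k *ᵥ ∑ i ∈ range k, mprod M (i + 1) k *ᵥ f i + f k := by
  rw [sum_range_succ, mprod_self, one_mulVec, mulVec_sum]
  congr 1
  refine sum_congr rfl fun i hi => ?_
  rw [mprod_succ _ (mem_range.1 hi), mulVec_mulVec]

lemma Eblk_mulVec {N : ℕ} (M : ℕ → Matrix (Fin n) (Fin n) ℝ) {k : ℕ} (hk : k ≤ N)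
    (D : Fin (N + 1) × Fin n → ℝ) (d : ℕ → Fin n → ℝ)
    (hD : ∀ i : Fin N, (fun c => D (i.succ, c)) = d i) :
    Eblk N M k *ᵥ D = ∑ i ∈ range k, mprod M (i + 1) k *ᵥ d i := by
  funext r
  have hk' : (range N).filter (· < k) = range k := by
    ext i; simp only [mem_filter, mem_range]; omega
  have hD' : ∀ (i : Fin N) c, D (i.succ, c) = d i c := fun i c => congrFun (hD i) c
  simp only [mulVec, dotProduct, Eblk, of_apply, ite_mul, zero_mul, Fintype.sum_prod_type,
    sum_ite_irrel, sum_const_zero, Fin.sum_univ_succ, Fin.coe_ofNat_eq_mod, Nat.zero_mod,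
    nonpos_iff_eq_zero, one_ne_zero, zero_le, and_true, ↓reduceIte, Fin.val_succ,
    le_add_iff_nonneg_left, Order.add_one_le_iff, true_and, hD', zero_add, Finset.sum_apply]
  rw [Fin.sum_univ_eq_sum_range (fun i => if i < k then ∑ c, mprod M (i + 1) k r c * d i c else 0),
    ← sum_filter, hk']

variable (A : ℕ → Matrix (Fin n) (Fin n) ℝ) (B : ℕ → Matrix (Fin n) (Fin m) ℝ)
  (α₁ : Matrix (Fin m) (Fin n) ℝ) (α₂ : Fin m → ℝ) (x : Fin n → ℝ)

lemma Fblk_zero : Fblk A B α₁ α₂ x 0 = x := by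
  simp [Fblk, mprod_self]

lemma Fblk_succ (k : ℕ) :
    Fblk A B α₁ α₂ x (k + 1) = Abar A B α₁ k *ᵥ Fblk A B α₁ α₂ x k + B k *ᵥ α₂ := by
  have h := sum_mprod_mulVec_succ (Abar A B α₁) (fun i => B i *ᵥ α₂) k
  simp only [mulVec_mulVec] at h
  rw [Fblk, Fblk, h, mprod_succ _ (Nat.zero_le k), mulVec_add, ← mulVec_mulVec]
  abel

lemma trajCL_succ (d : ℕ → Fin n → ℝ) (k : ℕ) :
    trajCL A B α₁ α₂ d x (k + 1)
      = Abar A B α₁ k *ᵥ trajCL A B α₁ α₂ d x k + B k *ᵥ α₂ + d k := by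
  rw [trajCL, Abar, add_mulVec, mulVec_add, ← mulVec_mulVec]
  abel

theorem trajCL_eq_Fblk_add_sum (d : ℕ → Fin n → ℝ) (k : ℕ) :
    trajCL A B α₁ α₂ d x k
      = Fblk A B α₁ α₂ x k + ∑ i ∈ range k, mprod (Abar A B α₁) (i + 1) k *ᵥ d i := by
  induction k with
  | zero => simp [trajCL, Fblk_zero]
  | succ k ih =>
    rw [trajCL_succ, ih, Fblk_succ, sum_mprod_mulVec_succ, mulVec_add]
    abel

lemma forall_Au_mulVec_le_iff {ε : ℝ} (hε : 0 ≤ ε) (v : Fin m → ℝ) :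
    (∀ s, (Au m *ᵥ v) s ≤ ε) ↔ ‖v‖ ≤ ε := by
  simp [pi_norm_le_iff_of_nonneg hε, Au, Sum.forall, abs_le, neg_mulVec, neg_le, forall_and,
    and_comm]

variable {q N : ℕ} (G : ℕ → Matrix (Fin q) (Fin n) ℝ)

lemma Ecl_mulVec_inl (D : Fin (N + 1) × Fin n → ℝ) (k : Fin (N + 1)) (r : Fin q) :
    (Ecl N A B G α₁ *ᵥ D) (Sum.inl (k, r)) = (G k *ᵥ (Eblk N (Abar A B α₁) k *ᵥ D)) r := by
  rw [mulVec_mulVec]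
  rfl

lemma Ecl_mulVec_inr (D : Fin (N + 1) × Fin n → ℝ) (k : Fin N) (s : Fin m ⊕ Fin m) :
    (Ecl N A B G α₁ *ᵥ D) (Sum.inr (k, s))
      = (Au m *ᵥ (α₁ *ᵥ (Eblk N (Abar A B α₁) k *ᵥ D))) s := by
  rw [mulVec_mulVec, mulVec_mulVec]
  rfl

theorem Ecl_mulVec_le_Fcl_iff (H : ℕ → Fin q → ℝ)
    {ε : ℝ} (hε : 0 ≤ ε) (d : ℕ → Fin n → ℝ) (D : Fin (N + 1) × Fin n → ℝ)
    (hD : ∀ i : Fin N, (fun c => D (i.succ, c)) = d i) :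
    Ecl N A B G α₁ *ᵥ D ≤ Fcl N A B G H α₁ α₂ x ε ↔
      (∀ k ≤ N, G k *ᵥ trajCL A B α₁ α₂ d x k ≤ H k) ∧
        (∀ k < N, ‖α₁ *ᵥ trajCL A B α₁ α₂ d x k + α₂‖ ≤ ε) := by
  have hE : ∀ k ≤ N, Eblk N (Abar A B α₁) k *ᵥ D
      = trajCL A B α₁ α₂ d x k - Fblk A B α₁ α₂ x k := fun k hk => by
    rw [Eblk_mulVec _ hk D d hD, trajCL_eq_Fblk_add_sum]
    abel
  have hstate : ∀ k (hk : k < N + 1),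
      (∀ r, (Ecl N A B G α₁ *ᵥ D) (Sum.inl (⟨k, hk⟩, r))
        ≤ Fcl N A B G H α₁ α₂ x ε (Sum.inl (⟨k, hk⟩, r))) ↔
      G k *ᵥ trajCL A B α₁ α₂ d x k ≤ H k := by
    intro k hk
    refine forall_congr' fun r => ?_
    rw [Ecl_mulVec_inl, hE k (Nat.lt_succ_iff.1 hk), mulVec_sub]
    exact sub_le_sub_iff_right _
  have hinput : ∀ k (hk : k < N),
      (∀ s, (Ecl N A B G α₁ *ᵥ D) (Sum.inr (⟨k, hk⟩, s))
        ≤ Fcl N A B G H α₁ α₂ x ε (Sum.inr (⟨k, hk⟩, s))) ↔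
      ‖α₁ *ᵥ trajCL A B α₁ α₂ d x k + α₂‖ ≤ ε := by
    intro k hk
    rw [← forall_Au_mulVec_le_iff hε]
    refine forall_congr' fun s => ?_
    have : α₁ *ᵥ (trajCL A B α₁ α₂ d x k - Fblk A B α₁ α₂ x k)
        = (α₁ *ᵥ trajCL A B α₁ α₂ d x k + α₂) - Sk A B α₁ α₂ x k := by
      rw [Sk, mulVec_sub]
      abel
    rw [Ecl_mulVec_inr, hE k hk.le, this, mulVec_sub]
    exact sub_le_sub_iff_right _
  rw [Pi.le_def, Sum.forall, Prod.forall, Prod.forall, Fin.forall_iff, Fin.forall_iff]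
  refine and_congr ⟨fun h k hk => ?_, fun h k hk => ?_⟩ (forall₂_congr hinput)
  · exact (hstate k (Nat.lt_succ_of_le hk)).1 (h k _)
  · exact (hstate k hk).2 (h k (Nat.lt_succ_iff.1 hk))

theorem robustFeasible_iff_forall_abs_le (H : ℕ → Fin q → ℝ) {μ ε : ℝ}
    (hμ : 0 ≤ μ) (hε : 0 ≤ ε) :
    RobustFeasible N A B G H x α₁ α₂ μ ε ↔
      ∀ D : Fin (N + 1) × Fin n → ℝ, (∀ j, |D j| ≤ μ) →
        Ecl N A B G α₁ *ᵥ D ≤ Fcl N A B G H α₁ α₂ x ε := by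
  constructor
  · intro hrob D hD
    let d : ℕ → Fin n → ℝ := fun i =>
      if h : i < N then fun c => D ((⟨i, h⟩ : Fin N).succ, c) else 0
    refine (Ecl_mulVec_le_Fcl_iff A B α₁ α₂ x G H hε d D fun i => ?_).2 (hrob d fun i hi => ?_)
    · simp only [d, dif_pos i.isLt, Fin.eta]
    · simpa [d, hi, pi_norm_le_iff_of_nonneg hμ] using fun c => hD _
  · intro hbox d hd
    -- block `0` of the stacked disturbance is a dummy: `Eblk` never reads it
    let D : Fin (N + 1) × Fin n → ℝ := fun jc =>
      Fin.cons (α := fun _ => Fin n → ℝ) 0 (fun i : Fin N => d i) jc.1 jc.2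
    refine (Ecl_mulVec_le_Fcl_iff A B α₁ α₂ x G H hε d D fun i => ?_).1 (hbox D fun jc => ?_)
    · simp [D]
    · obtain ⟨j, c⟩ := jc
      induction j using Fin.cases with
      | zero => simpa [D] using hμ
      | succ i => simpa [D] using (norm_le_pi_norm (d i) c).trans (hd i i.isLt)

theorem robustFeasible_iff_exists_certificate (H : ℕ → Fin q → ℝ) {μ ε : ℝ} (hμ : 0 ≤ μ)
    (hε : 0 ≤ ε) :
    RobustFeasible N A B G H x α₁ α₂ μ ε ↔
      ∃ P : Matrix ((Fin (N + 1) × Fin q) ⊕ (Fin N × (Fin m ⊕ Fin m)))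
          ((Fin (N + 1) × Fin n) ⊕ (Fin (N + 1) × Fin n)) ℝ,
        (∀ i j, 0 ≤ P i j) ∧ P * AbM N n = μ • Ecl N A B G α₁ ∧
          P *ᵥ BbV N n ≤ Fcl N A B G H α₁ α₂ x ε :=
  (robustFeasible_iff_forall_abs_le A B α₁ α₂ x G H hμ hε).trans
    (forall_abs_le_imp_mulVec_le_iff_exists_certificate _ _ hμ)

end Trajectory

theorem pareto_closedLoop_general {n m q N : ℕ}
    (A : ℕ → Matrix (Fin n) (Fin n) ℝ) (B : ℕ → Matrix (Fin n) (Fin m) ℝ)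
    (G : ℕ → Matrix (Fin q) (Fin n) ℝ) (H : ℕ → Fin q → ℝ)
    (x : Fin n → ℝ) (w₁ w₂ : ℝ) :
    sSup {v : ℝ | ∃ (μ ε : ℝ) (α₁ : Matrix (Fin m) (Fin n) ℝ) (α₂ : Fin m → ℝ),
        0 ≤ μ ∧ 0 ≤ ε ∧ v = w₁ * μ - w₂ * ε ∧
        ∀ d : ℕ → Fin n → ℝ, (∀ i, i < N → ‖d i‖ ≤ μ) →
          (∀ k, k ≤ N → (G k).mulVec (trajCL A B α₁ α₂ d x k) ≤ H k) ∧
          (∀ k, k < N → ‖α₁.mulVec (trajCL A B α₁ α₂ d x k) + α₂‖ ≤ ε)} =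
    sSup {v : ℝ | ∃ (μ ε : ℝ) (α₁ : Matrix (Fin m) (Fin n) ℝ) (α₂ : Fin m → ℝ)
        (P : Matrix ((Fin (N + 1) × Fin q) ⊕ (Fin N × (Fin m ⊕ Fin m)))
          ((Fin (N + 1) × Fin n) ⊕ (Fin (N + 1) × Fin n)) ℝ),
        0 ≤ μ ∧ 0 ≤ ε ∧ v = w₁ * μ - w₂ * ε ∧
        (∀ i j, 0 ≤ P i j) ∧
        P * AbM N n = μ • Ecl N A B G α₁ ∧
        P.mulVec (BbV N n) ≤ Fcl N A B G H α₁ α₂ x ε} := by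
  congr 1
  ext v
  constructor
  · rintro ⟨μ, ε, α₁, α₂, hμ, hε, hv, hrob⟩
    obtain ⟨P, hP, hPE, hPF⟩ :=
      (robustFeasible_iff_exists_certificate A B α₁ α₂ x G H hμ hε).1 hrob
    exact ⟨μ, ε, α₁, α₂, P, hμ, hε, hv, hP, hPE, hPF⟩
  · rintro ⟨μ, ε, α₁, α₂, P, hμ, hε, hv, hP, hPE, hPF⟩
    exact ⟨μ, ε, α₁, α₂, hμ, hε, hv,
      (robustFeasible_iff_exists_certificate A B α₁ α₂ x G H hμ hε).2 ⟨P, hP, hPE, hPF⟩⟩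

/-- Pareto trade-off between resilience and effort for the closed-loop LTV system:
the supremum of `w₁ μ - w₂ ε` over the robust formulation equals the supremum over the
Farkas-certified formulation. -/
theorem pareto_closedLoop {n m q N : ℕ}
    (A : ℕ → Matrix (Fin n) (Fin n) ℝ) (B : ℕ → Matrix (Fin n) (Fin m) ℝ)
    (G : ℕ → Matrix (Fin q) (Fin n) ℝ) (H : ℕ → Fin q → ℝ)
    (x : Fin n → ℝ) (w₁ w₂ : ℝ) (hw₁ : 0 ≤ w₁) (hw₂ : 0 ≤ w₂) :
    sSup {v : ℝ | ∃ (μ ε : ℝ) (α₁ : Matrix (Fin m) (Fin n) ℝ) (α₂ : Fin m → ℝ),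
        0 ≤ μ ∧ 0 ≤ ε ∧ v = w₁ * μ - w₂ * ε ∧
        ∀ d : ℕ → Fin n → ℝ, (∀ i, i < N → ‖d i‖ ≤ μ) →
          (∀ k, k ≤ N → (G k).mulVec (trajCL A B α₁ α₂ d x k) ≤ H k) ∧
          (∀ k, k < N → ‖α₁.mulVec (trajCL A B α₁ α₂ d x k) + α₂‖ ≤ ε)} =
    sSup {v : ℝ | ∃ (μ ε : ℝ) (α₁ : Matrix (Fin m) (Fin n) ℝ) (α₂ : Fin m → ℝ)
        (P : Matrix ((Fin (N + 1) × Fin q) ⊕ (Fin N × (Fin m ⊕ Fin m)))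
          ((Fin (N + 1) × Fin n) ⊕ (Fin (N + 1) × Fin n)) ℝ),
        0 ≤ μ ∧ 0 ≤ ε ∧ v = w₁ * μ - w₂ * ε ∧
        (∀ i j, 0 ≤ P i j) ∧
        P * AbM N n = μ • Ecl N A B G α₁ ∧
        P.mulVec (BbV N n) ≤ Fcl N A B G H α₁ α₂ x ε} :=
  pareto_closedLoop_general A B G H x w₁ w₂
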